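/- Let n ≥ 2 be an integer and ω ∈ ℂ a primitive n-th root of unity. Set P₁ = ∏_{i=1}^{n−1} Δ(X, ω^i) and P₂ = ∏_{i=1}^{n−1} Δ(ω^i, X) in ℂ[X]. Then the breadth of P₁ (its degree minus its trailing degree) equals 6(n−1), the breadth of P₂ is at most 2(n−1), and hence the breadth of P₁ is strictly greater than the breadth of P₂. -/

import Mathlib

/-! As a polynomial in `x`, `Δ(x, b)` is monic of degree 6 with constant term `b²`, so for `b ≠ 0`
its breadth is 6; as a polynomial in `y`, `Δ(a, y)` has degree at most 2. Both facts multiply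
over the `n - 1` nontrivial powers of `ω`, which are nonzero. -/

open Polynomial

/-- The two-variable Alexander polynomial `Δ` of the paper, written as a
function of two elements of `ℂ[X]` so that the one-variable substitutions
`Δ(X, b)` and `Δ(a, X)` are literal instances. -/
noncomputable def Delta (x y : ℂ[X]) : ℂ[X] :=
  x^6 + x^5*y - 2*x^5 - x^4*y + x^3*y^2 - 2*x^4 - 3*x^3*y - 2*x^2*y^2
    + x^3 - x^2*y - 2*x*y^2 + x*y + y^2

theorem natTrailingDegree_prod_eq_zero {R ι : Type*} [CommSemiring R] [NoZeroDivisors R]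
    [Nontrivial R] {s : Finset ι} {f : ι → R[X]} (hf : ∀ i ∈ s, (f i).coeff 0 ≠ 0) :
    (∏ i ∈ s, f i).natTrailingDegree = 0 :=
  natTrailingDegree_eq_zero.mpr <| .inr <| by
    rw [coeff_zero_prod]
    exact Finset.prod_ne_zero_iff.mpr hf

theorem monic_Delta_X_C (b : ℂ) : (Delta X (C b)).Monic := by
  unfold Delta
  monicity!

theorem natDegree_Delta_X_C (b : ℂ) : (Delta X (C b)).natDegree = 6 := by
  unfold Delta
  compute_degree!

theorem coeff_zero_Delta_X_C (b : ℂ) : (Delta X (C b)).coeff 0 = b ^ 2 := by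
  simp [Delta, coeff_zero_eq_eval_zero]

theorem natDegree_Delta_C_X_le (a : ℂ) : (Delta (C a) X).natDegree ≤ 2 := by
  unfold Delta
  compute_degree

section Products

variable {ι : Type*} (s : Finset ι) (b : ι → ℂ)

theorem natDegree_prod_Delta_X_C : (∏ i ∈ s, Delta X (C (b i))).natDegree = 6 * s.card := by
  rw [natDegree_prod_of_monic _ _ fun i _ => monic_Delta_X_C (b i)]
  simp only [natDegree_Delta_X_C, Finset.sum_const, smul_eq_mul, mul_comm]

theorem natTrailingDegree_prod_Delta_X_C (hb : ∀ i ∈ s, b i ≠ 0) :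
    (∏ i ∈ s, Delta X (C (b i))).natTrailingDegree = 0 :=
  natTrailingDegree_prod_eq_zero fun i hi => by
    rw [coeff_zero_Delta_X_C]
    exact pow_ne_zero 2 (hb i hi)

theorem natDegree_prod_Delta_C_X_le : (∏ i ∈ s, Delta (C (b i)) X).natDegree ≤ 2 * s.card :=
  calc (∏ i ∈ s, Delta (C (b i)) X).natDegree
      ≤ ∑ i ∈ s, (Delta (C (b i)) X).natDegree := natDegree_prod_le _ _
    _ ≤ ∑ _i ∈ s, 2 := Finset.sum_le_sum fun i _ => natDegree_Delta_C_X_le (b i)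
    _ = 2 * s.card := by rw [Finset.sum_const, smul_eq_mul, mul_comm]

end Products

/-- for `n ≥ 2` and `ω` a primitive `n`-th root of unity, the
breadth of `P₁ = ∏ Δ(X, ω^i)` equals `6(n−1)`, the breadth of
`P₂ = ∏ Δ(ω^i, X)` is at most `2(n−1)`, and the former is strictly larger. -/
theorem breadth_P1_gt_breadth_P2 (n : ℕ) (hn : 2 ≤ n) (ω : ℂ)
    (hω : IsPrimitiveRoot ω n) :
    (∏ i ∈ Finset.Icc 1 (n-1), Delta X (C (ω^i))).natDegree
      - (∏ i ∈ Finset.Icc 1 (n-1), Delta X (C (ω^i))).natTrailingDegree = 6*(n-1) ∧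
    (∏ i ∈ Finset.Icc 1 (n-1), Delta (C (ω^i)) X).natDegree
      - (∏ i ∈ Finset.Icc 1 (n-1), Delta (C (ω^i)) X).natTrailingDegree ≤ 2*(n-1) ∧
    (∏ i ∈ Finset.Icc 1 (n-1), Delta (C (ω^i)) X).natDegree
      - (∏ i ∈ Finset.Icc 1 (n-1), Delta (C (ω^i)) X).natTrailingDegree
    < (∏ i ∈ Finset.Icc 1 (n-1), Delta X (C (ω^i))).natDegree
      - (∏ i ∈ Finset.Icc 1 (n-1), Delta X (C (ω^i))).natTrailingDegree := by
  set s := Finset.Icc 1 (n - 1)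
  have hcard : s.card = n - 1 := by simp [s]
  have hpow : ∀ i ∈ s, ω ^ i ≠ 0 := fun i _ => pow_ne_zero i (hω.ne_zero (by omega))
  have hdeg1 := natDegree_prod_Delta_X_C s (ω ^ ·)
  have htrail1 := natTrailingDegree_prod_Delta_X_C s (ω ^ ·) hpow
  have hdeg2 := natDegree_prod_Delta_C_X_le s (ω ^ ·)
  simp only [hdeg1, htrail1, hcard] at hdeg2 ⊢
  omega
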